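/- For every integer n ≥ 0 and parameters a, b, the finite identity ∑_{j=0}^{n} (b;q)_j (1 - b q^{2j}) (b/a;q)_j a^j q^{j²} / ((1-b)(q;q)_j (aq;q)_j) = ((bq;q)_n/(aq;q)_n) ∑_{j=0}^{n} (b/a;q)_j a^j q^{(n+1)j} / (q;q)_j holds as an identity of rational functions in q, a, b. -/

import Mathlib

/-- the field of rational functions in the three variables `q`, `a`, `b` -/
noncomputable abbrev K3 : Type := FractionRing (MvPolynomial (Fin 3) ℚ)

/-- finite q-Pochhammer symbol `(x;q)_m` -/
noncomputable def qPoch (x q : K3) (m : ℕ) : K3 := ∏ i ∈ Finset.range m, (1 - x * q ^ i)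

/-!
Write `c_j = (b/a;q)_j a^j / (q;q)_j`, so that `c_{j+1} (1 - q^{j+1}) = c_j (a - b q^j)`, and
`S_n = ∑_{j ≤ n} c_j q^{(n+1)j}`; the right-hand side is `R_n = (bq;q)_n / (aq;q)_n · S_n`.
By the recurrence, `c_j q^{mj} ((1 - b q^m) q^j - (1 - a q^m))` telescopes in `j`, which yields
`(1 - b q^{n+1}) S_{n+1} - (1 - a q^{n+1}) S_n = (1 - b q^{2n+2}) c_{n+1} q^{(n+1)^2}`.
Hence `R_{n+1} - R_n` is the `(n+1)`-st summand of the left-hand side, and the identity follows by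
induction on `n`.
-/

open Finset MvPolynomial

theorem qPoch_zero (x q : K3) : qPoch x q 0 = 1 := prod_range_zero _

theorem qPoch_succ (x q : K3) (m : ℕ) : qPoch x q (m + 1) = qPoch x q m * (1 - x * q ^ m) :=
  prod_range_succ _ m

theorem qPoch_succ' (x q : K3) (m : ℕ) : qPoch x q (m + 1) = (1 - x) * qPoch (x * q) q m := by
  simp only [qPoch, prod_range_succ', pow_zero, mul_one, mul_assoc, ← pow_succ']
  ring

theorem qPoch_self_succ (q : K3) (m : ℕ) :
    qPoch q q (m + 1) = qPoch q q m * (1 - q ^ (m + 1)) := by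
  rw [qPoch_succ, pow_succ']

theorem qPoch_mul_self_succ (x q : K3) (m : ℕ) :
    qPoch (x * q) q (m + 1) = qPoch (x * q) q m * (1 - x * q ^ (m + 1)) := by
  rw [qPoch_succ, pow_succ', mul_assoc]

theorem qPoch_ne_zero {x q : K3} {m : ℕ} (h : ∀ i < m, 1 - x * q ^ i ≠ 0) : qPoch x q m ≠ 0 :=
  prod_ne_zero_iff.mpr fun i hi => h i (mem_range.mp hi)

theorem qPoch_self_ne_zero {q : K3} (hq : ∀ i, 1 - q ^ (i + 1) ≠ 0) (m : ℕ) : qPoch q q m ≠ 0 :=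
  qPoch_ne_zero fun i _ => by simpa [← pow_succ'] using hq i

theorem qPoch_mul_self_ne_zero {x q : K3} (hx : ∀ i, 1 - x * q ^ (i + 1) ≠ 0) (m : ℕ) :
    qPoch (x * q) q m ≠ 0 :=
  qPoch_ne_zero fun i _ => by simpa [mul_assoc, ← pow_succ'] using hx i

namespace AndrewsShanks

variable {q a b : K3}

noncomputable def coeff (q a b : K3) (j : ℕ) : K3 := qPoch (b / a) q j * a ^ j / qPoch q q j

noncomputable def partialSum (q a b : K3) (n : ℕ) : K3 :=
  ∑ j ∈ range (n + 1), coeff q a b j * q ^ ((n + 1) * j)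

noncomputable def term (q a b : K3) (j : ℕ) : K3 :=
  qPoch b q j * (1 - b * q ^ (2 * j)) * qPoch (b / a) q j * a ^ j * q ^ (j ^ 2) /
    ((1 - b) * qPoch q q j * qPoch (a * q) q j)

theorem coeff_zero : coeff q a b 0 = 1 := by simp [coeff, qPoch_zero]

theorem coeff_succ_mul (ha : a ≠ 0) {j : ℕ} (hq : 1 - q ^ (j + 1) ≠ 0) :
    coeff q a b (j + 1) * (1 - q ^ (j + 1)) = coeff q a b j * (a - b * q ^ j) := by
  simp only [coeff, qPoch_succ (b / a), qPoch_self_succ]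
  field_simp
  ring

theorem sum_coeff_mul_telescope (ha : a ≠ 0) (hq : ∀ i, 1 - q ^ (i + 1) ≠ 0) (m : ℕ) :
    ∑ j ∈ range (m + 1), coeff q a b j * q ^ (m * j) * ((1 - b * q ^ m) * q ^ j - (1 - a * q ^ m))
      = coeff q a b m * (a - b * q ^ m) * q ^ (m * (m + 1)) := by
  set d : ℕ → K3 := fun j => coeff q a b j * (1 - q ^ j) * q ^ (m * j)
  have hterm : ∀ j, coeff q a b j * q ^ (m * j) * ((1 - b * q ^ m) * q ^ j - (1 - a * q ^ m))
      = d (j + 1) - d j := fun j => by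
    simp only [d]
    linear_combination (-(q ^ (m * j) * q ^ m)) * coeff_succ_mul (b := b) ha (hq j)
  rw [sum_congr rfl fun j _ => hterm j, sum_range_sub]
  simp only [d, pow_zero, sub_self, mul_zero, zero_mul, sub_zero]
  rw [coeff_succ_mul ha (hq m)]

theorem mul_partialSum_succ (ha : a ≠ 0) (hq : ∀ i, 1 - q ^ (i + 1) ≠ 0) (n : ℕ) :
    (1 - b * q ^ (n + 1)) * partialSum q a b (n + 1)
      = (1 - a * q ^ (n + 1)) * partialSum q a b n
        + (1 - b * q ^ (2 * (n + 1))) * coeff q a b (n + 1) * q ^ ((n + 1) ^ 2) := by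
  have hsplit : ∑ j ∈ range (n + 1 + 1), coeff q a b j * q ^ ((n + 1) * j)
        * ((1 - b * q ^ (n + 1)) * q ^ j - (1 - a * q ^ (n + 1)))
      = (1 - b * q ^ (n + 1)) * partialSum q a b (n + 1)
        - (1 - a * q ^ (n + 1)) * (partialSum q a b n + coeff q a b (n + 1) * q ^ ((n + 1) ^ 2)) := by
    rw [partialSum, partialSum, sq, ← sum_range_succ (fun j => coeff q a b j * q ^ ((n + 1) * j)),
      mul_sum, mul_sum, ← sum_sub_distrib]
    exact sum_congr rfl fun j _ => by ring
  linear_combination sum_coeff_mul_telescope (b := b) ha hq (n + 1) - hsplit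

theorem term_succ (hb : 1 - b ≠ 0) (hq : ∀ i, 1 - q ^ (i + 1) ≠ 0)
    (haq : ∀ i, 1 - a * q ^ (i + 1) ≠ 0) (n : ℕ) :
    term q a b (n + 1) = qPoch (b * q) q n * (1 - b * q ^ (2 * (n + 1)))
      * coeff q a b (n + 1) * q ^ ((n + 1) ^ 2) / qPoch (a * q) q (n + 1) := by
  have := qPoch_self_ne_zero hq (n + 1)
  have := qPoch_mul_self_ne_zero haq (n + 1)
  rw [term, qPoch_succ' b, coeff]
  field_simp

theorem sum_term_eq (ha : a ≠ 0) (hb : 1 - b ≠ 0) (hq : ∀ i, 1 - q ^ (i + 1) ≠ 0)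
    (haq : ∀ i, 1 - a * q ^ (i + 1) ≠ 0) (n : ℕ) :
    ∑ j ∈ range (n + 1), term q a b j
      = qPoch (b * q) q n / qPoch (a * q) q n * partialSum q a b n := by
  induction n with
  | zero => simp [term, partialSum, coeff_zero, qPoch_zero, hb]
  | succ n ih =>
    have := qPoch_mul_self_ne_zero haq n
    have := haq n
    rw [sum_range_succ, ih, term_succ hb hq haq, qPoch_mul_self_succ, qPoch_mul_self_succ]
    field_simp
    -- `field_simp` has rewritten `qPoch (a * q)` as `qPoch (q * a)`
    linear_combination (-(qPoch (b * q) q n / qPoch (q * a) q n)) * mul_partialSum_succ ha hq n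

theorem sum_range_succ_eq_qPoch_div_mul_sum (ha : a ≠ 0) (hb : 1 - b ≠ 0)
    (hq : ∀ i, 1 - q ^ (i + 1) ≠ 0) (haq : ∀ i, 1 - a * q ^ (i + 1) ≠ 0) (n : ℕ) :
    (∑ j ∈ range (n + 1),
        qPoch b q j * (1 - b * q ^ (2 * j)) * qPoch (b / a) q j * a ^ j * q ^ (j ^ 2) /
          ((1 - b) * qPoch q q j * qPoch (a * q) q j)) =
    qPoch (b * q) q n / qPoch (a * q) q n *
      ∑ j ∈ range (n + 1), qPoch (b / a) q j * a ^ j * q ^ ((n + 1) * j) / qPoch q q j := by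
  simpa only [term, partialSum, coeff, div_mul_eq_mul_div] using sum_term_eq ha hb hq haq n

end AndrewsShanks

theorem one_sub_algebraMap_ne_zero {σ R : Type*} [CommRing R] [Nontrivial R] {p : MvPolynomial σ R}
    (hp : constantCoeff p = 0) :
    1 - algebraMap (MvPolynomial σ R) (FractionRing (MvPolynomial σ R)) p ≠ 0 := by
  rw [← map_one (algebraMap (MvPolynomial σ R) (FractionRing _)), ← map_sub, ne_eq,
    IsFractionRing.to_map_eq_zero_iff]
  exact fun h => by simpa [hp] using congrArg constantCoeff h

/-- Andrews' finite form generalizing Shanks' identity (Andrews 1986, Lemma 2), as an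
identity of rational functions in `q`, `a`, `b`. -/
theorem andrews_shanks_identity (n : ℕ) :
    letI q : K3 := algebraMap (MvPolynomial (Fin 3) ℚ) K3 (MvPolynomial.X 0)
    letI a : K3 := algebraMap (MvPolynomial (Fin 3) ℚ) K3 (MvPolynomial.X 1)
    letI b : K3 := algebraMap (MvPolynomial (Fin 3) ℚ) K3 (MvPolynomial.X 2)
    (∑ j ∈ Finset.range (n + 1),
        qPoch b q j * (1 - b * q ^ (2 * j)) * qPoch (b / a) q j * a ^ j * q ^ (j ^ 2) /
          ((1 - b) * qPoch q q j * qPoch (a * q) q j)) =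
    qPoch (b * q) q n / qPoch (a * q) q n *
      ∑ j ∈ Finset.range (n + 1),
        qPoch (b / a) q j * a ^ j * q ^ ((n + 1) * j) / qPoch q q j := by
  refine AndrewsShanks.sum_range_succ_eq_qPoch_div_mul_sum ?_ ?_ (fun i => ?_) (fun i => ?_) n
  · exact (map_ne_zero_iff _ (IsFractionRing.injective _ K3)).mpr (X_ne_zero 1)
  · exact one_sub_algebraMap_ne_zero (by simp)
  · rw [← map_pow]
    exact one_sub_algebraMap_ne_zero (by simp)
  · rw [← map_pow, ← map_mul]
    exact one_sub_algebraMap_ne_zero (by simp)
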